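/- Lemma 2.2, second inequality: Let α, β ∈ ℕ³ be multi-indices and set θ := max(|α|, |β|). There exists a constant C, depending only on α and β, such that for every ℤ³-periodic smooth divergence-free mean-zero field ξ and every ℤ³-periodic smooth field f: (⟨D^α(B_ξ f), D^β f⟩_{L²} + ⟨D^β(B_ξ f), D^α f⟩_{L²})² ≤ C ‖ξ‖_{W^{θ+1,∞}}² ‖f‖_{W^{θ,2}}⁴. -/

import Mathlib

open MeasureTheory

noncomputable section

/-- Points of ℝ³ (as `Fin 3 → ℝ`). -/
abbrev V3 := Fin 3 → ℝ
/-- Vector fields on ℝ³. -/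
abbrev VF := V3 → V3

/-- Smoothness of a vector field. -/
def SmoothVF (f : VF) : Prop := ContDiff ℝ (⊤ : ℕ∞) f

/-- Smoothness of a scalar function. -/
def SmoothS (p : V3 → ℝ) : Prop := ContDiff ℝ (⊤ : ℕ∞) p

/-- The periodicity cell [0,1)³. -/
def cube : Set V3 := Set.univ.pi fun _ => Set.Ico (0:ℝ) 1

/-- Partial derivative in the j-th coordinate, acting componentwise. -/
def pd (j : Fin 3) (f : VF) : VF := fun x => fderiv ℝ f x (Pi.single j 1)

/-- Iterated derivative D^α = ∂₁^{α₁}∂₂^{α₂}∂₃^{α₃} for a multi-index α = (α₁, α₂, α₃). -/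
def Dm (α : ℕ × ℕ × ℕ) (f : VF) : VF :=
  (pd 0)^[α.1] ((pd 1)^[α.2.1] ((pd 2)^[α.2.2] f))

/-- The order |α| of a multi-index. -/
def mdeg (α : ℕ × ℕ × ℕ) : ℕ := α.1 + α.2.1 + α.2.2

/-- ℤ³-periodicity of a vector field. -/
def Periodic3 (f : VF) : Prop :=
  ∀ (x : V3) (k : Fin 3 → ℤ), f (x + fun i => (k i : ℝ)) = f x

/-- ℤ³-periodicity of a scalar function. -/
def PeriodicS (p : V3 → ℝ) : Prop :=
  ∀ (x : V3) (k : Fin 3 → ℤ), p (x + fun i => (k i : ℝ)) = p x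

/-- Divergence-free: Σ_j ∂_j f^j ≡ 0. -/
def DivFree (f : VF) : Prop := ∀ x, ∑ j, pd j f x j = 0

/-- Mean-zero over the periodicity cell. -/
def MeanZero (f : VF) : Prop := (∫ x in cube, f x) = 0

/-- The L² inner product over the periodicity cell. -/
def L2inner (f g : VF) : ℝ := ∫ x in cube, ∑ i, f x i * g x i

/-- The finite set of multi-indices of order at most m. -/
def midx (m : ℕ) : Finset (ℕ × ℕ × ℕ) :=
  (Finset.range (m+1) ×ˢ Finset.range (m+1) ×ˢ Finset.range (m+1)).filter
    fun α => mdeg α ≤ m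

lemma midx_nonempty (m : ℕ) : (midx m).Nonempty :=
  ⟨(0,0,0), by
    unfold midx
    exact Finset.mem_filter.mpr ⟨Finset.mem_product.mpr ⟨by simp,
      Finset.mem_product.mpr ⟨by simp, by simp⟩⟩, by simp [mdeg]⟩⟩

/-- The W^{m,2} inner product ⟨f,g⟩_{W^{m,2}} = Σ_{|α|≤m} ⟨D^α f, D^α g⟩_{L²}. -/
def sobInner (m : ℕ) (f g : VF) : ℝ := ∑ α ∈ midx m, L2inner (Dm α f) (Dm α g)

/-- The squared W^{m,2} norm. -/
def sobNormSq (m : ℕ) (f : VF) : ℝ := sobInner m f f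

/-- The W^{k,∞} norm: max over |α| ≤ k of sup_x |D^α ξ(x)|. -/
def WinfNorm (k : ℕ) (ξ : VF) : ℝ :=
  (midx k).sup' (midx_nonempty k) fun α => ⨆ x, ‖Dm α ξ x‖

/-- The transport operator 𝓛_ξ f = Σ_j ξ^j ∂_j f. -/
def transport (ξ f : VF) : VF := fun x => ∑ j, ξ x j • pd j f x

/-- The stretching operator 𝓣_ξ f, with l-th component Σ_j f^j ∂_l ξ^j. -/
def stretch (ξ f : VF) : VF := fun x l => ∑ j, f x j * pd l ξ x j

/-- The L²-adjoint 𝓣*_ξ g, with j-th component Σ_l g^l ∂_l ξ^j. -/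
def stretchStar (ξ g : VF) : VF := fun x j => ∑ l, g x l * pd l ξ x j

/-- The transport–stretching operator B_ξ = 𝓛_ξ + 𝓣_ξ. -/
def Bop (ξ f : VF) : VF := fun x => transport ξ f x + stretch ξ f x

/-- The gradient of a scalar function. -/
def grad (p : V3 → ℝ) : VF := fun x i => fderiv ℝ p x (Pi.single i 1)

/-- `IsLeray u g` : g is the Leray projection 𝒫u of u, i.e. g is a ℤ³-periodic smooth
divergence-free mean-zero field and u − g = ∇p + c for some ℤ³-periodic smooth scalar p
and constant vector c. -/
def IsLeray (u g : VF) : Prop :=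
  Periodic3 g ∧ SmoothVF g ∧ DivFree g ∧ MeanZero g ∧
  ∃ (p : V3 → ℝ) (c : V3), PeriodicS p ∧ SmoothS p ∧
    ∀ x, u x - g x = grad p x + c

/-- The componentwise Laplacian. -/
def lap (f : VF) : VF := fun x => ∑ j, pd j (pd j f) x

/-- The Stokes inner product ⟨u,v⟩_{A^{m/2}}. -/
def stokesInner (m : ℕ) (u v : VF) : ℝ :=
  if m % 2 = 0 then L2inner (lap^[m/2] u) (lap^[m/2] v)
  else ∑ j : Fin 3, L2inner (pd j (lap^[m/2] u)) (pd j (lap^[m/2] v))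

/-- A ℤ³-periodic smooth divergence-free mean-zero vector field. -/
def GoodField (f : VF) : Prop :=
  Periodic3 f ∧ SmoothVF f ∧ DivFree f ∧ MeanZero f

/-!
Componentwise, smooth ℤ³-periodic functions form a commutative algebra on which the partial
derivatives act as commuting derivations, so `D^γ` obeys the multinomial Leibniz rule. Expanding
`D^γ (B_ξ f)` by Leibniz, the only term with `|γ| + 1` derivatives on `f` is the transport term
`𝓛_ξ (D^γ f)`; every other term is a product `D^μ ξ · D^ν f` with `|μ| ≤ θ + 1` and `|ν| ≤ θ`,
whose pairing with `D^β f` is at most `‖ξ‖_{W^{θ+1,∞}} ‖f‖²_{W^{θ,2}}` by `|uv| ≤ (u² + v²)/2`.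
The transport terms cancel in the symmetrised sum: the integral over the unit cell of a derivative
of a periodic function vanishes (divergence theorem), so for divergence-free `ξ` integration by
parts gives `⟨𝓛_ξ u, v⟩ + ⟨𝓛_ξ v, u⟩ = 0`.
-/

open Finset

theorem Derivation.pow_apply_mul {R A : Type*} [CommSemiring R] [CommSemiring A] [Algebra R A]
    (D : Derivation R A A) (n : ℕ) (a b : A) :
    ((D : Module.End R A) ^ n) (a * b) =
      ∑ k ∈ Iic n,
        n.choose k • (((D : Module.End R A) ^ k) a * ((D : Module.End R A) ^ (n - k)) b) := by
  rw [← Nat.range_succ_eq_Iic, ← Nat.sum_antidiagonal_eq_sum_range_succ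
    (fun i j => n.choose i • (((D : Module.End R A) ^ i) a * ((D : Module.End R A) ^ j) b))]
  induction n with
  | zero => simp
  | succ n ih =>
    rw [sum_antidiagonal_choose_succ_nsmul
      (fun i j => ((D : Module.End R A) ^ i) a * ((D : Module.End R A) ^ j) b) n, pow_succ',
      Module.End.mul_apply, ih]
    simp only [map_sum, map_nsmul, Derivation.coeFn_coe, Derivation.leibniz, smul_eq_mul, pow_succ',
      Module.End.mul_apply, nsmul_add, sum_add_distrib]
    congr 1
    refine sum_congr rfl fun ij hij => ?_
    rw [n.choose_symm_of_eq_add (mem_antidiagonal.1 hij).symm, mul_comm]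

def smoothPeriodic : Subalgebra ℝ (V3 → ℝ) where
  carrier := {g | SmoothS g ∧ PeriodicS g}
  mul_mem' hg hh := ⟨ContDiff.mul hg.1 hh.1, fun x k => by simp [hg.2 x k, hh.2 x k]⟩
  add_mem' hg hh := ⟨ContDiff.add hg.1 hh.1, fun x k => by simp [hg.2 x k, hh.2 x k]⟩
  algebraMap_mem' _ := ⟨contDiff_const, fun _ _ => rfl⟩

abbrev 𝒜 : Type := smoothPeriodic

instance : CoeFun 𝒜 (fun _ => V3 → ℝ) := ⟨Subtype.val⟩

theorem cube_subset_Icc : cube ⊆ Set.Icc 0 1 := fun _ hx =>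
  ⟨fun i => (hx i trivial).1, fun i => (hx i trivial).2.le⟩

namespace 𝒜

variable (g : 𝒜)

theorem smooth : SmoothS g := g.2.1

theorem periodic : PeriodicS g := g.2.2

theorem continuous : Continuous g := g.smooth.continuous

theorem differentiable : Differentiable ℝ g := g.smooth.differentiable (by simp)

theorem integrableOn_cube : IntegrableOn g cube :=
  (g.continuous.continuousOn.integrableOn_compact isCompact_Icc).mono_set cube_subset_Icc

end 𝒜

theorem SmoothS.contDiff_fderiv {g : V3 → ℝ} (hg : SmoothS g) :
    ContDiff ℝ (⊤ : ℕ∞) (fderiv ℝ g) :=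
  ContDiff.fderiv_right hg (by exact_mod_cast le_top)

theorem SmoothS.fderiv_apply {g : V3 → ℝ} (hg : SmoothS g) (v : V3) :
    SmoothS (fun x => fderiv ℝ g x v) :=
  hg.contDiff_fderiv.clm_apply contDiff_const

theorem PeriodicS.fderiv_apply {g : V3 → ℝ} (hg : PeriodicS g) (v : V3) :
    PeriodicS (fun x => fderiv ℝ g x v) := by
  intro x k
  dsimp only
  rw [← fderiv_comp_add_right, show (fun y => g (y + fun i => (k i : ℝ))) = g from
    funext fun y => hg y k]

def pdA (j : Fin 3) : Derivation ℝ 𝒜 𝒜 :=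
  Derivation.mk'
    { toFun := fun g => ⟨fun x => fderiv ℝ g x (Pi.single j 1),
        g.smooth.fderiv_apply _, g.periodic.fderiv_apply _⟩
      map_add' := fun g h => by
        ext x
        simp [fderiv_add (g.differentiable x) (h.differentiable x)]
      map_smul' := fun c g => by
        ext x
        simp [fderiv_const_smul (g.differentiable x)] }
    fun g h => by
      ext x
      simp [fderiv_mul (g.differentiable x) (h.differentiable x)]

@[simp]
theorem pdA_apply (j : Fin 3) (g : 𝒜) (x : V3) : pdA j g x = fderiv ℝ g x (Pi.single j 1) := rfl

theorem pdA_pdA_apply (j l : Fin 3) (g : 𝒜) (x : V3) :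
    pdA j (pdA l g) x = fderiv ℝ (fderiv ℝ g) x (Pi.single j 1) (Pi.single l 1) := by
  change fderiv ℝ (fun y => fderiv ℝ g y (Pi.single l 1)) x (Pi.single j 1) = _
  simp [fderiv_clm_apply (g.smooth.contDiff_fderiv.differentiable (by simp) x)
    (differentiableAt_const _)]

theorem pdA_comm (j l : Fin 3) : Commute (pdA j : Module.End ℝ 𝒜) (pdA l) := by
  ext g x
  simp only [Module.End.mul_apply, Derivation.coeFn_coe]
  rw [pdA_pdA_apply, pdA_pdA_apply, (g.smooth.contDiffAt (x := x)).isSymmSndFDerivAt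
    (by rw [minSmoothness_of_isRCLikeNormedField]; norm_cast)]

def DmA (γ : ℕ × ℕ × ℕ) : Module.End ℝ 𝒜 :=
  (pdA 0 : Module.End ℝ 𝒜) ^ γ.1 * (pdA 1 : Module.End ℝ 𝒜) ^ γ.2.1 *
    (pdA 2 : Module.End ℝ 𝒜) ^ γ.2.2

def mbinom (γ δ : ℕ × ℕ × ℕ) : ℕ :=
  γ.1.choose δ.1 * γ.2.1.choose δ.2.1 * γ.2.2.choose δ.2.2

theorem sum_mbinom (γ : ℕ × ℕ × ℕ) : ∑ δ ∈ Iic γ, mbinom γ δ = 2 ^ mdeg γ := by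
  simp only [Iic_prod_def, sum_product, mbinom, ← mul_sum, ← sum_mul, ← Nat.range_succ_eq_Iic,
    Nat.sum_range_choose, mdeg, pow_add]

theorem mdeg_sub_add_mdeg {γ δ : ℕ × ℕ × ℕ} (h : δ ∈ Iic γ) :
    mdeg (γ - δ) + mdeg δ = mdeg γ := by
  obtain ⟨hp, hq, hr⟩ : δ.1 ≤ γ.1 ∧ δ.2.1 ≤ γ.2.1 ∧ δ.2.2 ≤ γ.2.2 := by
    simpa [Prod.le_def] using h
  simp only [mdeg, Prod.fst_sub, Prod.snd_sub]
  omega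

theorem mdeg_eq_zero {δ : ℕ × ℕ × ℕ} : mdeg δ = 0 ↔ δ = 0 := by
  obtain ⟨p, q, r⟩ := δ
  simp [mdeg, Prod.mk_eq_zero]
  omega

theorem DmA_mul (γ : ℕ × ℕ × ℕ) (a b : 𝒜) :
    DmA γ (a * b) = ∑ δ ∈ Iic γ, mbinom γ δ • (DmA δ a * DmA (γ - δ) b) := by
  obtain ⟨p, q, r⟩ := γ
  simp only [DmA, Module.End.mul_apply, Derivation.pow_apply_mul, map_sum, map_nsmul, smul_sum,
    smul_smul, Iic_prod_def, sum_product, mbinom, Prod.fst_sub, Prod.snd_sub]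
  rw [sum_comm, sum_congr rfl fun _ _ => sum_comm, sum_comm]
  exact sum_congr rfl fun _ _ => sum_congr rfl fun _ _ => sum_congr rfl fun _ _ => by
    congr 1; ring

def unitIdx : Fin 3 → ℕ × ℕ × ℕ := ![(1, 0, 0), (0, 1, 0), (0, 0, 1)]

theorem mdeg_add_unitIdx (γ : ℕ × ℕ × ℕ) (j : Fin 3) : mdeg (γ + unitIdx j) = mdeg γ + 1 := by
  fin_cases j <;> simp [mdeg, unitIdx] <;> omega

theorem DmA_mul_pdA (γ : ℕ × ℕ × ℕ) (j : Fin 3) :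
    DmA γ * pdA j = DmA (γ + unitIdx j) := by
  fin_cases j <;> simp only [DmA, unitIdx, Fin.zero_eta, Fin.mk_one, Fin.reduceFinMk,
    Matrix.cons_val, Prod.fst_add, Prod.snd_add, add_zero, pow_succ, mul_assoc] <;> congr 1
  · rw [← ((pdA_comm 0 2).pow_right _).eq]
    exact (((pdA_comm 0 1).pow_right _).left_comm _).symm
  · rw [← ((pdA_comm 1 2).pow_right _).eq]

theorem DmA_commute_pdA (γ : ℕ × ℕ × ℕ) (j : Fin 3) : Commute (DmA γ) (pdA j) :=
  (((pdA_comm 0 j).pow_left _).mul_left ((pdA_comm 1 j).pow_left _)).mul_left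
    ((pdA_comm 2 j).pow_left _)

theorem DmA_pdA (γ : ℕ × ℕ × ℕ) (j : Fin 3) (g : 𝒜) :
    DmA γ (pdA j g) = DmA (γ + unitIdx j) g := by
  rw [← DmA_mul_pdA]; rfl

theorem pdA_DmA (γ : ℕ × ℕ × ℕ) (j : Fin 3) (g : 𝒜) :
    pdA j (DmA γ g) = DmA (γ + unitIdx j) g := by
  rw [← DmA_mul_pdA, (DmA_commute_pdA γ j).eq]; rfl

@[simp]
theorem DmA_zero : DmA 0 = 1 := by simp [DmA]

def cubeInt : 𝒜 →ₗ[ℝ] ℝ where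
  toFun g := ∫ x in cube, g x
  map_add' g h := integral_add g.integrableOn_cube h.integrableOn_cube
  map_smul' c _ := integral_const_mul c _

theorem cubeInt_apply (g : 𝒜) : cubeInt g = ∫ x in cube, g x := rfl

theorem cubeInt_mono {g h : 𝒜} (hgh : ∀ x, g x ≤ h x) : cubeInt g ≤ cubeInt h :=
  setIntegral_mono g.integrableOn_cube h.integrableOn_cube hgh

theorem cubeInt_mul_self_nonneg (g : 𝒜) : 0 ≤ cubeInt (g * g) :=
  setIntegral_nonneg (MeasurableSet.univ_pi fun _ => measurableSet_Ico) fun x _ =>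
    mul_self_nonneg (g x)

theorem cube_ae_eq_Icc : cube =ᵐ[volume] Set.Icc (0 : V3) 1 := Measure.univ_pi_Ico_ae_eq_Icc

theorem cubeInt_pdA (j : Fin 3) (g : 𝒜) : cubeInt (pdA j g) = 0 := by
  have hface (y : Fin 2 → ℝ) : g (j.insertNth 1 y) = g (j.insertNth 0 y) := by
    have hshift : j.insertNth (0 : ℝ) y + (fun i => ((Pi.single j 1 : Fin 3 → ℤ) i : ℝ)) =
        j.insertNth 1 y := by
      funext i
      rcases j.eq_self_or_eq_succAbove i with rfl | ⟨k, rfl⟩ <;> simp [Fin.succAbove_ne]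
    rw [← hshift, g.periodic]
  have hsum : (fun x => ∑ i, (if i = j then fderiv ℝ g x else 0) (Pi.single i 1)) = pdA j g := by
    ext x
    rw [Finset.sum_eq_single j (fun i _ hi => by simp [hi]) (by simp)]
    simp
  have hdiv := integral_divergence_of_hasFDerivAt_off_countable' (0 : V3) 1 zero_le_one
    (fun i => if i = j then (g : V3 → ℝ) else fun _ => 0)
    (fun i x => if i = j then fderiv ℝ g x else 0) ∅ Set.countable_empty
    (fun i => by split_ifs; exacts [g.continuous.continuousOn, continuousOn_const])
    (fun x _ i => by
      split_ifs
      · exact (g.differentiable x).hasFDerivAt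
      · exact hasFDerivAt_const 0 x)
    (by rw [hsum]; exact (pdA j g).continuous.continuousOn.integrableOn_compact isCompact_Icc)
  rw [cubeInt_apply, setIntegral_congr_set cube_ae_eq_Icc, ← hsum]
  refine hdiv.trans (Finset.sum_eq_zero fun i _ => ?_)
  by_cases hij : i = j
  · subst hij; simp [hface]
  · simp [hij]

theorem cubeInt_mul_pdA (j : Fin 3) (a w : 𝒜) :
    cubeInt (a * pdA j w) = -cubeInt (pdA j a * w) := by
  have h := cubeInt_pdA j (a * w)
  rw [Derivation.leibniz, smul_eq_mul, smul_eq_mul, map_add, mul_comm w] at h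
  linarith

theorem abs_cubeInt_mul_mul_le {p u v : 𝒜} {M N : ℝ} (hp : ∀ x, |p x| ≤ M)
    (hu : cubeInt (u * u) ≤ N) (hv : cubeInt (v * v) ≤ N) : |cubeInt (p * u * v)| ≤ M * N := by
  have hM : 0 ≤ M := (abs_nonneg _).trans (hp 0)
  set q : 𝒜 := (M / 2) • (u * u + v * v)
  have hq (x : V3) : |p x * u x * v x| ≤ q x := by
    simp only [q, Subalgebra.coe_smul, Subalgebra.coe_add, Subalgebra.coe_mul, Pi.smul_apply,
      Pi.add_apply, Pi.mul_apply, smul_eq_mul, abs_mul]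
    have huv : |u x| * |v x| ≤ (u x * u x + v x * v x) / 2 := by
      nlinarith [sq_nonneg (|u x| - |v x|), abs_mul_abs_self (u x), abs_mul_abs_self (v x)]
    calc |p x| * |u x| * |v x| = |p x| * (|u x| * |v x|) := by ring
      _ ≤ M * ((u x * u x + v x * v x) / 2) := mul_le_mul (hp x) huv (by positivity) hM
      _ = M / 2 * (u x * u x + v x * v x) := by ring
  have hupper : cubeInt (p * u * v) ≤ cubeInt q :=
    cubeInt_mono fun x => by simpa using (le_abs_self _).trans (hq x)
  have hlower : cubeInt (-q) ≤ cubeInt (p * u * v) :=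
    cubeInt_mono fun x => by simpa using neg_le_of_abs_le (hq x)
  have hq_int : cubeInt q = M / 2 * (cubeInt (u * u) + cubeInt (v * v)) := by
    simp only [q, map_smul, map_add, smul_eq_mul]
  rw [map_neg] at hlower
  rw [abs_le]
  constructor <;> nlinarith

def transportA (a u : Fin 3 → 𝒜) (i : Fin 3) : 𝒜 := ∑ j, a j * pdA j (u i)

def stretchA (a u : Fin 3 → 𝒜) (i : Fin 3) : 𝒜 := ∑ j, u j * pdA i (a j)

theorem sum_cubeInt_transportA_add_swap {a : Fin 3 → 𝒜} (ha : ∑ j, pdA j (a j) = 0)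
    (u v : Fin 3 → 𝒜) :
    ∑ i, cubeInt (transportA a u i * v i) + ∑ i, cubeInt (transportA a v i * u i) = 0 := by
  rw [← sum_add_distrib]
  refine sum_eq_zero fun i _ => ?_
  have hprod : transportA a u i * v i + transportA a v i * u i =
      ∑ j, a j * pdA j (u i * v i) := by
    simp only [transportA, Derivation.leibniz, smul_eq_mul, sum_mul, ← sum_add_distrib]
    exact sum_congr rfl fun j _ => by ring
  rw [← map_add, hprod, map_sum]
  simp only [cubeInt_mul_pdA, sum_neg_distrib, ← map_sum, ← sum_mul, ha, zero_mul, map_zero,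
    neg_zero]

theorem DmA_transportA_add_stretchA (γ : ℕ × ℕ × ℕ) (a b : Fin 3 → 𝒜) (i : Fin 3) :
    DmA γ (transportA a b i + stretchA a b i) = transportA a (fun k => DmA γ (b k)) i +
      ∑ j, (∑ δ ∈ (Iic γ).erase 0, mbinom γ δ • (DmA δ (a j) * DmA (γ - δ + unitIdx j) (b i)) +
        ∑ δ ∈ Iic γ, mbinom γ δ • (DmA δ (b j) * DmA (γ - δ + unitIdx i) (a j))) := by
  have hsplit (j : Fin 3) :
      ∑ δ ∈ Iic γ, mbinom γ δ • (DmA δ (a j) * DmA (γ - δ + unitIdx j) (b i)) =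
        a j * pdA j (DmA γ (b i)) +
          ∑ δ ∈ (Iic γ).erase 0, mbinom γ δ • (DmA δ (a j) * DmA (γ - δ + unitIdx j) (b i)) := by
    rw [← add_sum_erase _ _ (by simp : (0 : ℕ × ℕ × ℕ) ∈ Iic γ)]
    simp [mbinom, pdA_DmA]
  simp only [transportA, stretchA, map_add, map_sum, DmA_mul, DmA_pdA, hsplit, sum_add_distrib]
  abel

theorem abs_sum_nsmul_le {ι : Type*} (s : Finset ι) (c : ι → ℕ) (X : ι → ℝ) {M : ℝ}
    (h : ∀ t ∈ s, |X t| ≤ M) : |∑ t ∈ s, c t • X t| ≤ (∑ t ∈ s, c t) * M := by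
  calc |∑ t ∈ s, c t • X t| ≤ ∑ t ∈ s, |c t • X t| := abs_sum_le_sum_abs _ _
    _ ≤ ∑ t ∈ s, c t * M := sum_le_sum fun t ht => by
        rw [nsmul_eq_mul, abs_mul, Nat.abs_cast]
        exact mul_le_mul_of_nonneg_left (h t ht) (Nat.cast_nonneg _)
    _ = (∑ t ∈ s, c t) * M := by push_cast; rw [sum_mul]

-- The factor `18` counts the components `i`, the directions `j` and the two Leibniz sums.
theorem abs_sum_cubeInt_commutator_mul_le (a b : Fin 3 → 𝒜) {θ : ℕ} {γ γ' : ℕ × ℕ × ℕ}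
    {W N : ℝ} (hγ : mdeg γ ≤ θ) (hγ' : mdeg γ' ≤ θ)
    (hW : ∀ μ, mdeg μ ≤ θ + 1 → ∀ j x, |DmA μ (a j) x| ≤ W)
    (hN : ∀ μ, mdeg μ ≤ θ → ∀ k, cubeInt (DmA μ (b k) * DmA μ (b k)) ≤ N) :
    |∑ i, cubeInt ((DmA γ (transportA a b i + stretchA a b i) -
        transportA a (fun k => DmA γ (b k)) i) * DmA γ' (b i))| ≤ 18 * 2 ^ mdeg γ * (W * N) := by
  have hterm {μ ν : ℕ × ℕ × ℕ} (hμ : mdeg μ ≤ θ + 1) (hν : mdeg ν ≤ θ) (j k i : Fin 3) :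
      |cubeInt (DmA μ (a j) * DmA ν (b k) * DmA γ' (b i))| ≤ W * N :=
    abs_cubeInt_mul_mul_le (hW μ hμ j) (hN ν hν k) (hN γ' hγ' i)
  have hWN : 0 ≤ W * N :=
    (abs_nonneg _).trans (hterm (μ := 0) (ν := 0) (by simp [mdeg]) (by simp [mdeg]) 0 0 0)
  have hsum : ((∑ δ ∈ Iic γ, mbinom γ δ : ℕ) : ℝ) = 2 ^ mdeg γ := by
    exact_mod_cast sum_mbinom γ
  have htransport (i j : Fin 3) :
      |∑ δ ∈ (Iic γ).erase 0, mbinom γ δ •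
          cubeInt (DmA δ (a j) * DmA (γ - δ + unitIdx j) (b i) * DmA γ' (b i))| ≤
        2 ^ mdeg γ * (W * N) := by
    refine (abs_sum_nsmul_le _ _ _ (M := W * N) fun δ hδ => ?_).trans ?_
    · have hdeg := mdeg_sub_add_mdeg (mem_of_mem_erase hδ)
      have hδ0 : mdeg δ ≠ 0 := mdeg_eq_zero.not.2 (ne_of_mem_erase hδ)
      exact hterm (by omega) (by rw [mdeg_add_unitIdx]; omega) j i i
    · rw [← hsum]
      exact mul_le_mul_of_nonneg_right
        (by exact_mod_cast sum_le_sum_of_subset (erase_subset _ _)) hWN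
  have hstretch (i j : Fin 3) :
      |∑ δ ∈ Iic γ, mbinom γ δ •
          cubeInt (DmA δ (b j) * DmA (γ - δ + unitIdx i) (a j) * DmA γ' (b i))| ≤
        2 ^ mdeg γ * (W * N) := by
    rw [← hsum]
    refine abs_sum_nsmul_le _ _ _ fun δ hδ => ?_
    rw [mul_comm (DmA δ (b j))]
    have hdeg := mdeg_sub_add_mdeg hδ
    exact hterm (by rw [mdeg_add_unitIdx]; omega) (by omega) j j i
  simp only [DmA_transportA_add_stretchA, add_sub_cancel_left]
  simp only [sum_mul, add_mul, smul_mul_assoc, map_sum, map_add, map_nsmul]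
  calc _ ≤ ∑ i : Fin 3, ∑ j : Fin 3, (2 ^ mdeg γ * (W * N) + 2 ^ mdeg γ * (W * N)) :=
        (abs_sum_le_sum_abs _ _).trans <| sum_le_sum fun i _ =>
          (abs_sum_le_sum_abs _ _).trans <| sum_le_sum fun j _ =>
            (abs_add_le _ _).trans (add_le_add (htransport i j) (hstretch i j))
    _ = 18 * 2 ^ mdeg γ * (W * N) := by simp; ring

def toVF (g : Fin 3 → 𝒜) : VF := fun x i => g i x

@[simp]
theorem toVF_apply (g : Fin 3 → 𝒜) (x : V3) (i : Fin 3) : toVF g x i = g i x := rfl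

theorem exists_eq_toVF {F : VF} (hp : Periodic3 F) (hs : SmoothVF F) : ∃ g, F = toVF g :=
  ⟨fun i => ⟨fun x => F x i, contDiff_pi.mp hs i, fun x k => congrFun (hp x k) i⟩, rfl⟩

theorem pd_toVF (j : Fin 3) (g : Fin 3 → 𝒜) : pd j (toVF g) = toVF fun i => pdA j (g i) := by
  ext x i
  rw [pd, show toVF g = fun x i => g i x from rfl, fderiv_pi fun i => (g i).differentiable x]
  simp

theorem Dm_toVF (γ : ℕ × ℕ × ℕ) (g : Fin 3 → 𝒜) : Dm γ (toVF g) = toVF fun i => DmA γ (g i) := by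
  have hiter (j : Fin 3) (n : ℕ) (g : Fin 3 → 𝒜) :
      (pd j)^[n] (toVF g) = toVF fun i => ((pdA j : Module.End ℝ 𝒜) ^ n) (g i) := by
    induction n generalizing g with
    | zero => rfl
    | succ n ih => rw [Function.iterate_succ_apply, pd_toVF, ih]; rfl
  simp only [Dm, DmA, hiter, Module.End.mul_apply]

theorem transport_toVF (a u : Fin 3 → 𝒜) :
    transport (toVF a) (toVF u) = toVF (transportA a u) := by
  ext x i
  simp [transport, transportA, pd_toVF]

theorem Bop_toVF (a b : Fin 3 → 𝒜) :
    Bop (toVF a) (toVF b) = toVF fun i => transportA a b i + stretchA a b i := by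
  ext x i
  simp [Bop, transport_toVF, stretch, stretchA, pd_toVF]

theorem L2inner_toVF (u v : Fin 3 → 𝒜) : L2inner (toVF u) (toVF v) = ∑ i, cubeInt (u i * v i) :=
  integral_finsetSum _ fun i _ => (u i * v i).integrableOn_cube

theorem sum_pdA_eq_zero_of_divFree {a : Fin 3 → 𝒜} (h : DivFree (toVF a)) :
    ∑ j, pdA j (a j) = 0 := by
  ext x
  simpa [pd_toVF] using h x

theorem PeriodicS.bddAbove_range {φ : V3 → ℝ} (hφ : PeriodicS φ) (hc : Continuous φ) :
    BddAbove (Set.range φ) := by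
  refine ((isCompact_Icc (a := (0 : V3)) (b := 1)).image hc).bddAbove.mono ?_
  rintro _ ⟨x, rfl⟩
  refine ⟨fun i => Int.fract (x i),
    ⟨fun i => Int.fract_nonneg _, fun i => (Int.fract_lt_one _).le⟩, ?_⟩
  rw [← hφ _ fun i => ⌊x i⌋]
  congr 1
  ext i
  exact Int.fract_add_floor (x i)

theorem bddAbove_range_norm_toVF (g : Fin 3 → 𝒜) : BddAbove (Set.range fun x => ‖toVF g x‖) :=
  PeriodicS.bddAbove_range (fun x k => congrArg norm (funext fun i => (g i).periodic x k))
    (continuous_pi fun i => (g i).continuous).norm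

theorem mem_midx {m : ℕ} {α : ℕ × ℕ × ℕ} : α ∈ midx m ↔ mdeg α ≤ m := by
  rw [midx, Finset.mem_filter]
  simp only [mem_product, mem_range, mdeg]
  omega

theorem abs_DmA_apply_le_WinfNorm (a : Fin 3 → 𝒜) {k : ℕ} {μ : ℕ × ℕ × ℕ} (hμ : mdeg μ ≤ k)
    (j : Fin 3) (x : V3) : |DmA μ (a j) x| ≤ WinfNorm k (toVF a) :=
  calc |DmA μ (a j) x| = ‖Dm μ (toVF a) x j‖ := by rw [Dm_toVF]; rfl
    _ ≤ ‖Dm μ (toVF a) x‖ := norm_le_pi_norm _ j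
    _ ≤ ⨆ x, ‖Dm μ (toVF a) x‖ := le_ciSup (f := fun x => ‖Dm μ (toVF a) x‖)
        (by rw [Dm_toVF]; exact bddAbove_range_norm_toVF _) x
    _ ≤ WinfNorm k (toVF a) := le_sup' (fun α => ⨆ x, ‖Dm α (toVF a) x‖) (mem_midx.2 hμ)

theorem cubeInt_DmA_mul_self_le_sobNormSq (b : Fin 3 → 𝒜) {m : ℕ} {μ : ℕ × ℕ × ℕ}
    (hμ : mdeg μ ≤ m) (k : Fin 3) :
    cubeInt (DmA μ (b k) * DmA μ (b k)) ≤ sobNormSq m (toVF b) := by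
  simp only [sobNormSq, sobInner, Dm_toVF, L2inner_toVF]
  calc _ ≤ ∑ i, cubeInt (DmA μ (b i) * DmA μ (b i)) :=
        single_le_sum (fun i _ => cubeInt_mul_self_nonneg _) (mem_univ k)
    _ ≤ _ := single_le_sum (f := fun ν => ∑ i, cubeInt (DmA ν (b i) * DmA ν (b i)))
        (fun ν _ => sum_nonneg fun i _ => cubeInt_mul_self_nonneg _) (mem_midx.2 hμ)

theorem L2inner_transport_add_swap {a : Fin 3 → 𝒜} (ha : DivFree (toVF a)) (u v : Fin 3 → 𝒜) :
    L2inner (transport (toVF a) (toVF u)) (toVF v) +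
      L2inner (transport (toVF a) (toVF v)) (toVF u) = 0 := by
  rw [transport_toVF, transport_toVF, L2inner_toVF, L2inner_toVF]
  exact sum_cubeInt_transportA_add_swap (sum_pdA_eq_zero_of_divFree ha) u v

theorem abs_L2inner_Dm_Bop_sub_transport_le (a b : Fin 3 → 𝒜) {θ : ℕ} {γ γ' : ℕ × ℕ × ℕ}
    (hγ : mdeg γ ≤ θ) (hγ' : mdeg γ' ≤ θ) :
    |L2inner (Dm γ (Bop (toVF a) (toVF b))) (Dm γ' (toVF b)) -
        L2inner (transport (toVF a) (Dm γ (toVF b))) (Dm γ' (toVF b))| ≤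
      18 * 2 ^ mdeg γ * (WinfNorm (θ + 1) (toVF a) * sobNormSq θ (toVF b)) := by
  rw [Bop_toVF, Dm_toVF, Dm_toVF, Dm_toVF, transport_toVF, L2inner_toVF, L2inner_toVF,
    ← sum_sub_distrib]
  simp only [← map_sub, ← sub_mul]
  exact abs_sum_cubeInt_commutator_mul_le a b hγ hγ'
    (fun μ hμ j x => abs_DmA_apply_le_WinfNorm a hμ j x)
    (fun μ hμ k => cubeInt_DmA_mul_self_le_sobNormSq b hμ k)

/-- Lemma 2.2, second inequality. -/
theorem stmt9 (α β : ℕ × ℕ × ℕ) :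
    ∃ C : ℝ, ∀ ξ f : VF, GoodField ξ → Periodic3 f → SmoothVF f →
      (L2inner (Dm α (Bop ξ f)) (Dm β f) + L2inner (Dm β (Bop ξ f)) (Dm α f)) ^ 2 ≤
      C * WinfNorm (max (mdeg α) (mdeg β) + 1) ξ ^ 2
        * (sobNormSq (max (mdeg α) (mdeg β)) f) ^ 2 := by
  refine ⟨(18 * 2 ^ mdeg α + 18 * 2 ^ mdeg β) ^ 2, ?_⟩
  rintro ξ f ⟨hξp, hξs, hdiv, -⟩ hfp hfs
  obtain ⟨a, rfl⟩ := exists_eq_toVF hξp hξs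
  obtain ⟨b, rfl⟩ := exists_eq_toVF hfp hfs
  have hα := abs_L2inner_Dm_Bop_sub_transport_le a b (le_max_left (mdeg α) (mdeg β))
    (le_max_right _ _)
  have hβ := abs_L2inner_Dm_Bop_sub_transport_le a b (le_max_right (mdeg α) (mdeg β))
    (le_max_left _ _)
  have hskew := L2inner_transport_add_swap hdiv (fun i => DmA α (b i)) (fun i => DmA β (b i))
  rw [← Dm_toVF, ← Dm_toVF] at hskew
  have hsum := (abs_add_le _ _).trans (add_le_add hα hβ)
  rw [sub_add_sub_comm, hskew, sub_zero, ← add_mul] at hsum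
  calc _ = |L2inner (Dm α (Bop (toVF a) (toVF b))) (Dm β (toVF b)) +
        L2inner (Dm β (Bop (toVF a) (toVF b))) (Dm α (toVF b))| ^ 2 := (sq_abs _).symm
    _ ≤ _ := pow_le_pow_left₀ (abs_nonneg _) hsum 2
    _ = _ := by ring
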